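/- If Δ(w) = { (ψ(w) − β)/ℓ^α : (ℓ^α, β) ∈ P(L) } \ {w} is empty for some w ∈ Z_{d,ℓ}, then the Newton polygon of L has a unique slope μ_1 and w = −μ_1. -/

import Mathlib

open Polynomial Finset

noncomputable def PL {K : Type*} [Field K] (ℓ n : ℕ) (a : ℕ → Polynomial K) : Finset (ℚ × ℚ) :=
  (Finset.range (n + 1)).biUnion fun i =>
    (a i).support.image fun j : ℕ => ((ℓ : ℚ) ^ i, (j : ℚ))

noncomputable def PsiSet {K : Type*} [Field K] (ℓ n : ℕ) (a : ℕ → Polynomial K) (v : ℚ) :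
    Finset ℚ :=
  (PL ℓ n a).image fun p => v * p.1 + p.2

noncomputable def psi {K : Type*} [Field K] (ℓ n : ℕ) (a : ℕ → Polynomial K) (v : ℚ) : ℚ :=
  ((PsiSet ℓ n a v).min).untopD 0

noncomputable def piF {K : Type*} [Field K] (ℓ n : ℕ) (a : ℕ → Polynomial K) (q : ℚ) : ℚ :=
  (((PL ℓ n a).image fun p => (q - p.2) / p.1).max).unbotD 0

def slopeSet {K : Type*} [Field K] (ℓ n : ℕ) (a : ℕ → Polynomial K) : Set ℚ :=
  {μ | ∃ b : ℚ,
    (∃ p ∈ PL ℓ n a, ∃ q ∈ PL ℓ n a, p ≠ q ∧ p.2 - μ * p.1 = b ∧ q.2 - μ * q.1 = b) ∧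
    ∀ p ∈ PL ℓ n a, b ≤ p.2 - μ * p.1}

noncomputable def scaleEmb (ℓ : ℕ) (hℓ : 2 ≤ ℓ) (i : ℕ) : ℚ ↪o ℚ :=
  (OrderIso.mulLeft₀ ((ℓ : ℚ) ^ i)
    (pow_pos (by exact_mod_cast Nat.lt_of_lt_of_le Nat.zero_lt_two hℓ) i)).toOrderEmbedding

noncomputable def mahlerOp {K : Type*} [Field K] (ℓ : ℕ) (hℓ : 2 ≤ ℓ) (n : ℕ)
    (a : ℕ → Polynomial K) (f : HahnSeries ℚ K) : HahnSeries ℚ K :=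
  ∑ i ∈ Finset.range (n + 1),
    (HahnSeries.ofPowerSeries ℚ K (a i : PowerSeries K)) *
      HahnSeries.embDomain (scaleEmb ℓ hℓ i) f

def Zdl (d ℓ : ℕ) : Set ℚ := {x | ∃ i : ℕ, ∃ m : ℤ, x = (m : ℚ) / (d * ℓ ^ i)}

noncomputable def DeltaSet {K : Type*} [Field K] (ℓ n : ℕ) (a : ℕ → Polynomial K)
    (w : ℚ) : Finset ℚ :=
  ((PL ℓ n a).image fun p => (psi ℓ n a w - p.2) / p.1) \ {w}

/-!
If Δ(w) is empty, every point of P(L) lies on the line `w X + Y = ψ(w)`. Since `a₀ a_n ≠ 0`,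
P(L) has points of abscissa `1` and `ℓ ^ n > 1`, so the lower hull is this single segment and its
slope is `-w`.
-/

theorem eq_neg_of_ne_of_mem_lines {k : Type*} [Field k] {p q : k × k} {w c μ b : k}
    (hpc : w * p.1 + p.2 = c) (hqc : w * q.1 + q.2 = c)
    (hpb : p.2 - μ * p.1 = b) (hqb : q.2 - μ * q.1 = b) (hpq : p ≠ q) : μ = -w := by
  have hfst : p.1 ≠ q.1 := fun h => hpq (Prod.ext h (by linear_combination hpc - hqc - w * h))
  have hmul : (μ + w) * (p.1 - q.1) = 0 := by linear_combination hpc - hqc - hpb + hqb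
  linear_combination (mul_eq_zero.1 hmul).resolve_right (sub_ne_zero.2 hfst)

section

variable {K : Type*} [Field K] {ℓ n : ℕ} {a : ℕ → Polynomial K}

theorem mem_PL {p : ℚ × ℚ} :
    p ∈ PL ℓ n a ↔ ∃ i ≤ n, ∃ j ∈ (a i).support, ((ℓ : ℚ) ^ i, (j : ℚ)) = p := by
  simp [PL]

theorem pow_mem_PL {i j : ℕ} (hi : i ≤ n) (hj : j ∈ (a i).support) :
    ((ℓ : ℚ) ^ i, (j : ℚ)) ∈ PL ℓ n a :=
  mem_PL.2 ⟨i, hi, j, hj, rfl⟩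

theorem fst_pos_of_mem_PL (hℓ : 0 < ℓ) {p : ℚ × ℚ} (hp : p ∈ PL ℓ n a) : 0 < p.1 := by
  obtain ⟨i, -, j, -, rfl⟩ := mem_PL.1 hp
  exact pow_pos (by exact_mod_cast hℓ) i

theorem exists_mem_PL_fst_ne (hℓ : 1 < ℓ) (h0 : a 0 ≠ 0) (hn : a n ≠ 0) (hn1 : 1 ≤ n) :
    ∃ p ∈ PL ℓ n a, ∃ q ∈ PL ℓ n a, p.1 ≠ q.1 := by
  obtain ⟨j₀, hj₀⟩ := nonempty_support_iff.2 h0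
  obtain ⟨jₙ, hjₙ⟩ := nonempty_support_iff.2 hn
  refine ⟨_, pow_mem_PL n.zero_le hj₀, _, pow_mem_PL le_rfl hjₙ, ?_⟩
  rw [pow_zero]
  exact (one_lt_pow₀ (by exact_mod_cast hℓ) (by omega)).ne

theorem mul_add_eq_psi_of_deltaSet_eq_empty (hℓ : 0 < ℓ) {w : ℚ} (hΔ : DeltaSet ℓ n a w = ∅)
    {p : ℚ × ℚ} (hp : p ∈ PL ℓ n a) : w * p.1 + p.2 = psi ℓ n a w := by
  have h := sdiff_eq_empty_iff_subset.1 hΔ (mem_image_of_mem _ hp)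
  rw [mem_singleton, div_eq_iff (fst_pos_of_mem_PL hℓ hp).ne'] at h
  linarith

theorem slopeSet_eq_singleton_of_mem_line {w c : ℚ} (hline : ∀ p ∈ PL ℓ n a, w * p.1 + p.2 = c)
    (htwo : ∃ p ∈ PL ℓ n a, ∃ q ∈ PL ℓ n a, p.1 ≠ q.1) : slopeSet ℓ n a = {-w} := by
  ext μ
  constructor
  · rintro ⟨b, ⟨p, hp, q, hq, hpq, hpb, hqb⟩, -⟩
    exact eq_neg_of_ne_of_mem_lines (hline p hp) (hline q hq) hpb hqb hpq
  · rintro rfl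
    obtain ⟨p, hp, q, hq, hpq⟩ := htwo
    refine ⟨c, ⟨p, hp, q, hq, fun h => hpq (congrArg Prod.fst h), ?_, ?_⟩, fun r hr => ?_⟩
    · linarith [hline p hp]
    · linarith [hline q hq]
    · linarith [hline r hr]

end

theorem stmt16_general {K : Type*} [Field K] (ℓ n : ℕ) (hℓ : 2 ≤ ℓ) (a : ℕ → Polynomial K)
    (h0 : a 0 ≠ 0) (hn : a n ≠ 0) (hn1 : 1 ≤ n)
    (w : ℚ) (hΔ : DeltaSet ℓ n a w = ∅) :
    ∃ μ : ℚ, slopeSet ℓ n a = {μ} ∧ w = -μ :=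
  ⟨-w, slopeSet_eq_singleton_of_mem_line
    (fun _ hp => mul_add_eq_psi_of_deltaSet_eq_empty (by omega) hΔ hp)
    (exists_mem_PL_fst_ne (by omega) h0 hn hn1), (neg_neg w).symm⟩

theorem stmt16 {K : Type*} [Field K] (ℓ n : ℕ) (hℓ : 2 ≤ ℓ) (a : ℕ → Polynomial K)
    (h0 : a 0 ≠ 0) (hn : a n ≠ 0) (hn1 : 1 ≤ n) (d : ℕ) (hd : 1 ≤ d)
    (hdsl : ∀ μ ∈ slopeSet ℓ n a, ∃ m : ℤ, (d : ℚ) * μ = m)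
    (w : ℚ) (hw : w ∈ Zdl d ℓ) (hΔ : DeltaSet ℓ n a w = ∅) :
    ∃ μ : ℚ, slopeSet ℓ n a = {μ} ∧ w = -μ :=
  stmt16_general ℓ n hℓ a h0 hn hn1 w hΔ
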